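/- Let g = ℝ^n and let v_1,...,v_k be part of a ℤ-basis of ℤ^n (primitive lattice vectors, linearly independent). Let ε, ε' ∈ (ℝ^n)* and suppose the cones C = {η : ⟨η - ε, v_i⟩ ≥ 0 for all i} and C' = {η : ⟨η - ε', w_j⟩ ≥ 0 for all j} are equal, where w_1,...,w_m are also linearly independent primitive lattice vectors. Then k = m, the sets {v_1,...,v_k} and {w_1,...,w_m} are equal, and ⟨ε, v_i⟩ = ⟨ε', v_i⟩ for all i. -/

import Mathlib

/-- The pairing between `η ∈ (ℝⁿ)*` (written in coordinates) and a lattice vector `v ∈ ℤⁿ`. -/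
def pairR {n : ℕ} (η : Fin n → ℝ) (v : Fin n → ℤ) : ℝ := ∑ j, η j * (v j : ℝ)

/-- A lattice vector is primitive: it is nonzero and not a nontrivial integer multiple
of another lattice vector. -/
def IsPrimitiveVec {n : ℕ} (v : Fin n → ℤ) : Prop :=
  v ≠ 0 ∧ ∀ (d : ℤ) (w : Fin n → ℤ), v = d • w → IsUnit d

/-!
Equal cones have equal recession cones, so `{η | ∀ i, 0 ≤ η vᵢ}` and `{η | ∀ j, 0 ≤ η wⱼ}`
coincide. Their lineality spaces then agree, so the `vᵢ` and the `wⱼ` span the same subspace.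
Expanding each family in the other with the help of biorthogonal functionals gives two mutually
inverse matrices, and evaluating those functionals on the cones shows both matrices are
nonnegative. A nonnegative matrix with nonnegative inverse is monomial, so every `wⱼ` is a
positive multiple of some `vᵢ`, and two primitive lattice vectors on the same ray are equal.
Finally `ε' ∈ C` and `ε ∈ C'` give the two inequalities between `⟨ε, vᵢ⟩` and `⟨ε', vᵢ⟩`.
-/

open Module Submodule Set

section DualCone

variable {K E ι κ : Type*} [Field K] [AddCommGroup E] [Module K E]

theorem LinearIndependent.exists_biorthogonal [DecidableEq ι] {x : ι → E}
    (hx : LinearIndependent K x) :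
    ∃ f : ι → Dual K E, ∀ i l, f i (x l) = if l = i then 1 else 0 := by
  choose f hf using fun i => LinearMap.exists_extend ((Basis.span hx).coord i)
  refine ⟨f, fun i l => ?_⟩
  have : f i (x l) = (Basis.span hx).coord i (Basis.span hx l) := by
    rw [← hf i, Basis.span_apply]; rfl
  simp [this, Finsupp.single_apply]

theorem eq_sum_smul_of_biorthogonal [Fintype ι] [DecidableEq ι] {x : ι → E} {f : ι → Dual K E}
    (hf : ∀ i l, f i (x l) = if l = i then 1 else 0) {z : E} (hz : z ∈ span K (range x)) :
    z = ∑ i, f i z • x i := by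
  obtain ⟨c, rfl⟩ := (mem_span_range_iff_exists_fun K).mp hz
  simp [map_sum, hf]

theorem Matrix.of_mul_of_eq_one_of_biorthogonal [Fintype ι] [Fintype κ] [DecidableEq κ]
    {x : ι → E} {y : κ → E} {f : ι → Dual K E} {g : κ → Dual K E}
    (hg : ∀ j l, g j (y l) = if l = j then 1 else 0) (hy : ∀ j, y j = ∑ i, f i (y j) • x i) :
    Matrix.of (fun j i => f i (y j)) * Matrix.of (fun i l => g l (x i)) = 1 := by
  ext j l
  have := congrArg (g l) (hy j)
  simp only [map_sum, map_smul, smul_eq_mul, hg] at this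
  simp [Matrix.mul_apply, Matrix.one_apply, ← this]

theorem mem_span_range_of_forall_dual_eq_zero {x : ι → E} {z : E}
    (h : ∀ f : Dual K E, (∀ i, f (x i) = 0) → f z = 0) : z ∈ span K (range x) := by
  by_contra hz
  obtain ⟨f, hfz, hf⟩ := exists_dual_map_eq_bot_of_notMem hz inferInstance
  refine hfz (h f fun i => ?_)
  simpa [hf] using mem_map_of_mem (f := f) (subset_span ⟨i, rfl⟩ : x i ∈ span K (range x))

theorem apply_eq_of_translate_eq [PartialOrder K] [IsOrderedAddMonoid K] {x : ι → E}
    {y : κ → E} {e e' : Dual K E}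
    (h : {f : Dual K E | ∀ i, 0 ≤ (f - e) (x i)} = {f | ∀ j, 0 ≤ (f - e') (y j)})
    {i : ι} {j : κ} (hij : x i = y j) : e (x i) = e' (x i) := by
  have he' : e' ∈ {f : Dual K E | ∀ i, 0 ≤ (f - e) (x i)} := h ▸ fun j => by simp
  have he : e ∈ {f : Dual K E | ∀ j, 0 ≤ (f - e') (y j)} := h ▸ fun i => by simp
  have h₁ := he' i
  have h₂ := he j
  rw [LinearMap.sub_apply, sub_nonneg] at h₁ h₂
  exact le_antisymm h₁ (hij ▸ h₂)

variable [LinearOrder K] [IsStrictOrderedRing K]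

theorem mem_span_range_of_forall_dual_nonneg {x : ι → E} {z : E}
    (h : ∀ f : Dual K E, (∀ i, 0 ≤ f (x i)) → 0 ≤ f z) : z ∈ span K (range x) :=
  mem_span_range_of_forall_dual_eq_zero fun f hf =>
    le_antisymm (by simpa using h (-f) fun i => by simp [hf i]) (h f fun i => (hf i).ge)

theorem Matrix.exists_pos_and_eq_zero_of_nonneg_of_mul_eq_one [Fintype ι] [Fintype κ]
    [DecidableEq ι] [DecidableEq κ] {C : Matrix κ ι K} {D : Matrix ι κ K}
    (hC : ∀ j i, 0 ≤ C j i) (hD : ∀ i j, 0 ≤ D i j) (hCD : C * D = 1) (hDC : D * C = 1)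
    (j : κ) : ∃ i, 0 < C j i ∧ ∀ l ≠ i, C j l = 0 := by
  have hjj : ∑ i, C j i * D i j = 1 := by simpa [Matrix.mul_apply] using congrFun₂ hCD j j
  obtain ⟨i, -, hi⟩ := Finset.exists_ne_zero_of_sum_ne_zero (hjj.trans_ne one_ne_zero)
  have hCji : 0 < C j i := (hC j i).lt_of_ne' (left_ne_zero_of_mul hi)
  have hDij : 0 < D i j := (hD i j).lt_of_ne' (right_ne_zero_of_mul hi)
  refine ⟨i, hCji, fun l hl => ?_⟩
  have hil : ∑ j', D i j' * C j' l = 0 := by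
    simpa [Matrix.mul_apply, Matrix.one_apply, hl.symm] using congrFun₂ hDC i l
  have := (Finset.sum_eq_zero_iff_of_nonneg fun j' _ => mul_nonneg (hD i j') (hC j' l)).mp hil j
    (Finset.mem_univ j)
  exact (mul_eq_zero.mp this).resolve_left hDij.ne'

theorem nonneg_of_forall_nonneg_add_mul {a b : K} (h : ∀ t : K, 0 ≤ t → 0 ≤ a + t * b) :
    0 ≤ b := by
  by_contra! hb
  have := h ((|a| + 1) / -b) (div_nonneg (by positivity) (neg_nonneg.mpr hb.le))
  rw [div_mul_eq_mul_div, div_neg, mul_div_assoc, div_self hb.ne, mul_one] at this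
  linarith [le_abs_self a]

theorem nonneg_of_translate_subset {x : ι → E} {y : κ → E} {e e' : Dual K E}
    (h : {f : Dual K E | ∀ i, 0 ≤ (f - e) (x i)} ⊆ {f | ∀ j, 0 ≤ (f - e') (y j)})
    (f : Dual K E) (hf : ∀ i, 0 ≤ f (x i)) (j : κ) : 0 ≤ f (y j) := by
  refine nonneg_of_forall_nonneg_add_mul (a := (e - e') (y j)) fun t ht => ?_
  have := h (show e + t • f ∈ _ from fun i => by simpa using mul_nonneg ht (hf i)) j
  simp only [LinearMap.sub_apply, LinearMap.add_apply, LinearMap.smul_apply, smul_eq_mul] at this ⊢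
  linarith

theorem exists_pos_smul_eq_of_dualCone_eq [Fintype ι] [Fintype κ] {x : ι → E} {y : κ → E}
    (hx : LinearIndependent K x) (hy : LinearIndependent K y)
    (hxy : ∀ f : Dual K E, (∀ i, 0 ≤ f (x i)) → ∀ j, 0 ≤ f (y j))
    (hyx : ∀ f : Dual K E, (∀ j, 0 ≤ f (y j)) → ∀ i, 0 ≤ f (x i)) (j : κ) :
    ∃ i, ∃ c : K, 0 < c ∧ y j = c • x i := by
  classical
  obtain ⟨f, hf⟩ := hx.exists_biorthogonal
  obtain ⟨g, hg⟩ := hy.exists_biorthogonal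
  have hy_eq : ∀ j, y j = ∑ i, f i (y j) • x i := fun j =>
    eq_sum_smul_of_biorthogonal hf (mem_span_range_of_forall_dual_nonneg fun φ hφ => hxy φ hφ j)
  have hx_eq : ∀ i, x i = ∑ j, g j (x i) • y j := fun i =>
    eq_sum_smul_of_biorthogonal hg (mem_span_range_of_forall_dual_nonneg fun φ hφ => hyx φ hφ i)
  have hf_nonneg : ∀ i l, 0 ≤ f i (x l) := fun i l => by rw [hf]; split_ifs <;> simp
  have hg_nonneg : ∀ j l, 0 ≤ g j (y l) := fun j l => by rw [hg]; split_ifs <;> simp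
  obtain ⟨i, hpos, hzero⟩ := Matrix.exists_pos_and_eq_zero_of_nonneg_of_mul_eq_one
    (C := .of fun j i => f i (y j)) (D := .of fun i j => g j (x i))
    (fun j i => hxy (f i) (hf_nonneg i) j) (fun i j => hyx (g j) (hg_nonneg j) i)
    (Matrix.of_mul_of_eq_one_of_biorthogonal hg hy_eq)
    (Matrix.of_mul_of_eq_one_of_biorthogonal hf hx_eq) j
  refine ⟨i, f i (y j), hpos, ?_⟩
  refine (hy_eq j).trans (Finset.sum_eq_single i (fun l _ hl => ?_) (by simp))
  rw [← Matrix.of_apply (fun j i => f i (y j)), hzero l hl, zero_smul]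

end DualCone

namespace IsPrimitiveVec

variable {n : ℕ} {a b : Fin n → ℤ}

theorem isUnit_of_forall_dvd (ha : IsPrimitiveVec a) {d : ℤ} (h : ∀ t, d ∣ a t) : IsUnit d :=
  ha.2 d (fun t => a t / d) (funext fun t => (Int.mul_ediv_cancel' (h t)).symm)

theorem eq_one_of_forall_dvd (ha : IsPrimitiveVec a) {d : ℤ} (hd : 0 < d) (h : ∀ t, d ∣ a t) :
    d = 1 := by
  rcases Int.isUnit_iff.mp (ha.isUnit_of_forall_dvd h) with h1 | h1 <;> omega

theorem eq_of_smul_eq_smul (ha : IsPrimitiveVec a) (hb : IsPrimitiveVec b) {p q : ℤ}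
    (hp : 0 < p) (hq : 0 < q) (hpq : IsCoprime p q) (h : q • a = p • b) : a = b := by
  have hab : ∀ t, q * a t = p * b t := fun t => congrFun h t
  have hq1 : q = 1 :=
    hb.eq_one_of_forall_dvd hq fun t => hpq.symm.dvd_of_dvd_mul_left ⟨a t, (hab t).symm⟩
  have hp1 : p = 1 :=
    ha.eq_one_of_forall_dvd hp fun t => hpq.dvd_of_dvd_mul_left ⟨b t, hab t⟩
  simpa [hp1, hq1] using h

theorem eq_of_cast_eq_smul {K : Type*} [Field K] [LinearOrder K] [IsStrictOrderedRing K]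
    (ha : IsPrimitiveVec a) (hb : IsPrimitiveVec b) {c : K} (hc : 0 < c)
    (h : (fun t => (a t : K)) = c • fun t => (b t : K)) : a = b := by
  obtain ⟨t₀, ht₀⟩ : ∃ t₀, b t₀ ≠ 0 := Function.ne_iff.mp hb.1
  -- `c` is the rational number `a t₀ / b t₀`; clearing its reduced denominator gives `q • a = p • b`.
  set r : ℚ := a t₀ / b t₀
  have hcr : c = r := by
    have : (a t₀ : K) = c * b t₀ := congrFun h t₀
    rw [eq_comm, ← eq_div_iff (by exact_mod_cast ht₀)] at this
    simp [this, r]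
  refine ha.eq_of_smul_eq_smul hb (Rat.num_pos.mpr (by exact_mod_cast hcr ▸ hc))
    (by exact_mod_cast r.den_pos) (Rat.isCoprime_num_den r) (funext fun t => ?_)
  have hat : (a t : ℚ) = r * b t := by
    have : (a t : K) = c * b t := congrFun h t
    rw [hcr] at this
    exact_mod_cast this
  have : ((r.den * a t : ℤ) : ℚ) = (r.num * b t : ℤ) := by
    push_cast; rw [hat, ← Rat.mul_den_eq_num]; ring
  exact_mod_cast this

end IsPrimitiveVec

theorem setOf_pairR_eq_preimage {n k : ℕ} (v : Fin k → Fin n → ℤ) (ε : Fin n → ℝ) :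
    {η : Fin n → ℝ | ∀ i, 0 ≤ pairR (η - ε) (v i)} =
      dotProductEquiv ℝ (Fin n) ⁻¹'
        {f | ∀ i, 0 ≤ (f - dotProductEquiv ℝ (Fin n) ε) fun j => (v i j : ℝ)} := by
  ext η
  simp [pairR, dotProduct, sub_mul]

/-- a unimodular cone in `(ℝⁿ)*` determines its defining data: if the cones
defined by `(v, ε)` and `(w, ε')` coincide (with the `vᵢ`, resp. `wⱼ`, linearly independent
primitive lattice vectors), then `k = m`, `{v₁,...,v_k} = {w₁,...,w_m}`, and
`⟨ε, vᵢ⟩ = ⟨ε', vᵢ⟩` for all `i`. -/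
theorem stmt_2 {n k m : ℕ}
    (v : Fin k → (Fin n → ℤ)) (w : Fin m → (Fin n → ℤ))
    (hv : LinearIndependent ℝ (fun i => fun j => ((v i j : ℝ))))
    (hw : LinearIndependent ℝ (fun i => fun j => ((w i j : ℝ))))
    (hvprim : ∀ i, IsPrimitiveVec (v i)) (hwprim : ∀ i, IsPrimitiveVec (w i))
    (ε ε' : Fin n → ℝ)
    (hC : {η : Fin n → ℝ | ∀ i, 0 ≤ pairR (η - ε) (v i)} =
          {η : Fin n → ℝ | ∀ j, 0 ≤ pairR (η - ε') (w j)}) :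
    k = m ∧ Set.range v = Set.range w ∧ ∀ i, pairR ε (v i) = pairR ε' (v i) := by
  rw [setOf_pairR_eq_preimage, setOf_pairR_eq_preimage] at hC
  replace hC := (dotProductEquiv ℝ (Fin n)).surjective.preimage_injective hC
  have hvw : ∀ i, ∃ j, v i = w j := fun i => by
    obtain ⟨j, c, hc, h⟩ := exists_pos_smul_eq_of_dualCone_eq hw hv
      (nonneg_of_translate_subset hC.ge) (nonneg_of_translate_subset hC.le) i
    exact ⟨j, (hvprim i).eq_of_cast_eq_smul (hwprim j) hc h⟩
  have hwv : ∀ j, ∃ i, w j = v i := fun j => by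
    obtain ⟨i, c, hc, h⟩ := exists_pos_smul_eq_of_dualCone_eq hv hw
      (nonneg_of_translate_subset hC.le) (nonneg_of_translate_subset hC.ge) j
    exact ⟨i, (hwprim j).eq_of_cast_eq_smul (hvprim i) hc h⟩
  have hrange : range v = range w :=
    Subset.antisymm (range_subset_iff.mpr fun i => (hvw i).imp fun _ => Eq.symm)
      (range_subset_iff.mpr fun j => (hwv j).imp fun _ => Eq.symm)
  refine ⟨?_, hrange, fun i => ?_⟩
  · have hvinj := hv.injective.of_comp (f := fun (u : Fin n → ℤ) j => (u j : ℝ))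
    have hwinj := hw.injective.of_comp (f := fun (u : Fin n → ℤ) j => (u j : ℝ))
    have := Nat.card_range_of_injective hvinj
    rwa [hrange, Nat.card_range_of_injective hwinj, Nat.card_fin, Nat.card_fin, eq_comm] at this
  · obtain ⟨j, hj⟩ := hvw i
    exact apply_eq_of_translate_eq hC (congrArg (fun (u : Fin n → ℤ) t => (u t : ℝ)) hj)
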